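/- There is a universal constant C > 0 such that the following holds. Let μ be an arbitrary probability measure on {0,1}^n, let f : {0,1}^n → {0,1,†}, let t ≥ 1 be an integer, let ε ∈ (0,1/2], and let k be an integer with k ≥ C·(t/ε)·log(2t/ε). If Pr_{x∼μ^(ℓ)}[ f(x) = † ] < (ε/4)^2 for every ℓ ≤ 2t, then there exists b ∈ {0,1} such that Pr_{S∼μ^(k)}[ for all ℓ ≤ t, I_S^{b,ℓ}(f) ≥ 1 − ε ] ≥ 1 − ε. -/
import Mathlib
set_option linter.unusedSectionVars false
set_option maxHeartbeats 2000000


open MeasureTheory Finset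
open scoped Classical

/-- Influence of coalition `S` towards value `b`. -/
noncomputable def infl {ι : Type*} {α : Type*} (μ : Measure (ι → Bool))
    (f : (ι → Bool) → α) (S : Finset ι) (b : α) : ℝ :=
  (μ {x | ∃ y, (∀ j ∉ S, y j = x j) ∧ f y = b}).toReal

/-- The boosted measure `μ^(t)`: the distribution of `x¹ ∨ ⋯ ∨ xᵗ` for i.i.d. `xⁱ ∼ μ`. -/
noncomputable def boost {n : ℕ} (μ : Measure (Fin n → Bool)) (t : ℕ) :
    Measure (Fin n → Bool) :=
  (Measure.pi fun _ : Fin t => μ).map (fun xs i => Finset.univ.sup fun j => xs j i)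

/-- The support of `x ∈ {0,1}^n` viewed as a subset of `[n]`. -/
def supp {n : ℕ} (x : Fin n → Bool) : Finset (Fin n) :=
  Finset.univ.filter fun i => x i = true

/-- Coordinatewise OR. -/
def orv {n : ℕ} (x y : Fin n → Bool) : Fin n → Bool := fun i => x i || y i

/-- The boosted influence `I_S^{b,t}(f)` of coalition `S` towards `b`,
measured with respect to `μ^(t)`. -/
noncomputable def inflB {n : ℕ} {α : Type*} (μ : Measure (Fin n → Bool))
    (f : (Fin n → Bool) → α) (S : Finset (Fin n)) (b : α) (t : ℕ) : ℝ :=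
  infl (boost μ t) f S b

section
variable {n : ℕ} (μ : Measure (Fin n → Bool)) [IsProbabilityMeasure μ]

lemma measSet {α : Type*} [MeasurableSpace α] [MeasurableSingletonClass α] [Countable α]
    (s : Set α) : MeasurableSet s := s.to_countable.measurableSet

instance boost_prob (a : ℕ) : IsProbabilityMeasure (boost μ a) := by
  unfold boost
  exact Measure.isProbabilityMeasure_map (measurable_of_countable _).aemeasurable

lemma fin_meas_sum {α : Type*} [MeasurableSpace α] [MeasurableSingletonClass α] [Fintype α]
    (ν : Measure α) (A : Set α) :
    ν A = ∑ x : α, if x ∈ A then ν {x} else 0 := by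
  have h1 : ν A = ν (Finset.univ.filter (· ∈ A) : Finset α) := by
    congr 1; ext y; simp
  rw [h1]
  have h2 : ∀ (s : Finset α), ν s = ∑ x ∈ s, ν {x} := by
    intro s
    rw [← measure_biUnion_finset]
    · congr 1; ext y; simp
    · intro x _ y _ hxy; simp [Set.disjoint_singleton, hxy]
    · intro x _; exact measurableSet_singleton x
  rw [h2, Finset.sum_filter]

/-- one-sample weight -/
noncomputable def w1 (x : Fin n → Bool) : ℝ := (μ {x}).toReal
/-- boosted weight -/
noncomputable def W (a : ℕ) (x : Fin n → Bool) : ℝ := (boost μ a {x}).toReal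

noncomputable def ind (p : Prop) : ℝ := if p then 1 else 0

/-- big or -/
noncomputable def bigor {n m : ℕ} (xs : Fin m → (Fin n → Bool)) : Fin n → Bool :=
  fun i => Finset.univ.sup fun j => xs j i

lemma boost_link (a : ℕ) (A : Set (Fin n → Bool)) :
    ((boost μ a) A).toReal = ∑ x : Fin n → Bool, W μ a x * ind (x ∈ A) := by
  rw [fin_meas_sum]
  rw [ENNReal.toReal_sum (by intro x _; split; exacts [measure_ne_top _ _, by simp])]
  apply Finset.sum_congr rfl
  intro x _
  unfold ind W
  by_cases h : x ∈ A
  · rw [if_pos h, if_pos h, mul_one]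
  · rw [if_neg h, if_neg h, mul_zero]; simp

lemma expect_boost (m : ℕ) (φ : (Fin n → Bool) → ℝ) :
    ∑ x : Fin n → Bool, W μ m x * φ x
      = ∑ g : Fin m → (Fin n → Bool), (∏ i, w1 μ (g i)) * φ (bigor g) := by
  have hW : ∀ x, W μ m x = ∑ g : Fin m → (Fin n → Bool),
      if bigor g = x then ∏ i, w1 μ (g i) else 0 := by
    intro x
    unfold W boost
    rw [Measure.map_apply (measurable_of_countable _) (measSet _)]
    have hpre : (fun (xs : Fin m → (Fin n → Bool)) (i : Fin n) => Finset.univ.sup fun j => xs j i) ⁻¹'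
        {x} = {g | bigor g = x} := rfl
    rw [hpre, fin_meas_sum]
    rw [ENNReal.toReal_sum (by intro g _; split; exacts [measure_ne_top _ _, by simp])]
    apply Finset.sum_congr rfl
    intro g _
    by_cases h : bigor g = x
    · simp only [h, Set.mem_setOf_eq, if_true]
      have hs : ({g} : Set (Fin m → (Fin n → Bool))) = Set.univ.pi fun i => {g i} := by
        rw [Set.univ_pi_singleton]
      rw [hs, Measure.pi_pi, ENNReal.toReal_prod]
      rfl
    · rw [if_neg h, if_neg (by exact h : ¬ g ∈ {g | bigor g = x})]; simp
  calc ∑ x : Fin n → Bool, W μ m x * φ x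
      = ∑ x : Fin n → Bool, ∑ g : Fin m → (Fin n → Bool),
          (if bigor g = x then ∏ i, w1 μ (g i) else 0) * φ x := by
        apply Finset.sum_congr rfl; intro x _; rw [hW, Finset.sum_mul]
    _ = ∑ g : Fin m → (Fin n → Bool), ∑ x : Fin n → Bool,
          (if bigor g = x then ∏ i, w1 μ (g i) else 0) * φ x := Finset.sum_comm
    _ = ∑ g : Fin m → (Fin n → Bool), (∏ i, w1 μ (g i)) * φ (bigor g) := by
        apply Finset.sum_congr rfl; intro g _
        rw [Finset.sum_eq_single (bigor g)]
        · simp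
        · intro y _ hy
          rw [if_neg (fun h => hy h.symm), zero_mul]
        · simp



lemma bool_sup_or (a b : Bool) : a ⊔ b = (a || b) := by revert a b; decide

lemma sup_split {a b : ℕ} (h : Fin (a+b) → Bool) :
    univ.sup h = univ.sup (fun i => h (Fin.castAdd b i)) ⊔ univ.sup (fun i => h (Fin.natAdd a i)) := by
  apply le_antisymm
  · apply Finset.sup_le
    intro i _
    induction i using Fin.addCases with
    | left j => exact le_sup_of_le_left (Finset.le_sup (f := fun i => h (Fin.castAdd b i)) (mem_univ j))
    | right j => exact le_sup_of_le_right (Finset.le_sup (f := fun i => h (Fin.natAdd a i)) (mem_univ j))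
  · apply sup_le
    · exact Finset.sup_le fun j _ => Finset.le_sup (mem_univ (Fin.castAdd b j))
    · exact Finset.sup_le fun j _ => Finset.le_sup (mem_univ (Fin.natAdd a j))

noncomputable def ee (n a b : ℕ) : ((Fin a → (Fin n → Bool)) × (Fin b → (Fin n → Bool))) ≃ (Fin (a+b) → (Fin n → Bool)) :=
  (Equiv.sumArrowEquivProdArrow (Fin a) (Fin b) (Fin n → Bool)).symm.trans
    (Equiv.arrowCongr finSumFinEquiv (Equiv.refl _))

lemma ee_castAdd {n a b : ℕ} (u : Fin a → (Fin n → Bool)) (v) (i : Fin a) :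
    ee n a b (u, v) (Fin.castAdd b i) = u i := by
  simp [ee, Equiv.sumArrowEquivProdArrow, Equiv.arrowCongr]

lemma ee_natAdd {n a b : ℕ} (u : Fin a → (Fin n → Bool)) (v) (i : Fin b) :
    ee n a b (u, v) (Fin.natAdd a i) = v i := by
  simp [ee, Equiv.sumArrowEquivProdArrow, Equiv.arrowCongr]

lemma bigor_ee {n a b : ℕ} (u : Fin a → (Fin n → Bool)) (v : Fin b → (Fin n → Bool)) :
    bigor (ee n a b (u, v)) = orv (bigor u) (bigor v) := by
  funext coord
  show univ.sup (fun j => ee n a b (u,v) j coord) = _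
  rw [sup_split (fun j => ee n a b (u,v) j coord)]
  have h1 : (fun i => ee n a b (u,v) (Fin.castAdd b i) coord) = fun i => u i coord := by
    funext i; rw [ee_castAdd]
  have h2 : (fun i => ee n a b (u,v) (Fin.natAdd a i) coord) = fun i => v i coord := by
    funext i; rw [ee_natAdd]
  rw [h1, h2, bool_sup_or]
  rfl

lemma expect_add (a b : ℕ) (φ : (Fin n → Bool) → ℝ) :
    ∑ x : Fin n → Bool, W μ (a+b) x * φ x
      = ∑ s : Fin n → Bool, W μ a s * ∑ s' : Fin n → Bool, W μ b s' * φ (orv s s') := by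
  rw [expect_boost]
  rw [← Equiv.sum_comp (ee n a b) (fun g => (∏ i, w1 μ (g i)) * φ (bigor g))]
  rw [Fintype.sum_prod_type]
  have step : ∀ u : Fin a → (Fin n → Bool),
      ∑ v : Fin b → (Fin n → Bool), (∏ i, w1 μ (ee n a b (u, v) i)) * φ (bigor (ee n a b (u, v)))
      = (∏ i, w1 μ (u i)) * ∑ s' : Fin n → Bool, W μ b s' * φ (orv (bigor u) s') := by
    intro u
    have hprod : ∀ v : Fin b → (Fin n → Bool),
        (∏ i, w1 μ (ee n a b (u, v) i)) = (∏ i, w1 μ (u i)) * ∏ i, w1 μ (v i) := by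
      intro v
      rw [Fin.prod_univ_add]
      congr 1
      · apply Finset.prod_congr rfl; intro i _; rw [ee_castAdd]
      · apply Finset.prod_congr rfl; intro i _; rw [ee_natAdd]
    calc ∑ v : Fin b → (Fin n → Bool), (∏ i, w1 μ (ee n a b (u, v) i)) * φ (bigor (ee n a b (u, v)))
        = ∑ v : Fin b → (Fin n → Bool), (∏ i, w1 μ (u i)) * ((∏ i, w1 μ (v i)) * φ (orv (bigor u) (bigor v))) := by
          apply Finset.sum_congr rfl; intro v _
          rw [hprod, bigor_ee, mul_assoc]
      _ = (∏ i, w1 μ (u i)) * ∑ v : Fin b → (Fin n → Bool), (∏ i, w1 μ (v i)) * φ (orv (bigor u) (bigor v)) := by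
          rw [Finset.mul_sum]
      _ = (∏ i, w1 μ (u i)) * ∑ s' : Fin n → Bool, W μ b s' * φ (orv (bigor u) s') := by
          rw [expect_boost μ b (fun z => φ (orv (bigor u) z))]
  calc ∑ u : Fin a → (Fin n → Bool), ∑ v : Fin b → (Fin n → Bool),
        (∏ i, w1 μ (ee n a b (u, v) i)) * φ (bigor (ee n a b (u, v)))
      = ∑ u : Fin a → (Fin n → Bool), (∏ i, w1 μ (u i)) * ∑ s' : Fin n → Bool, W μ b s' * φ (orv (bigor u) s') := by
        apply Finset.sum_congr rfl; intro u _; rw [step]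
    _ = ∑ s : Fin n → Bool, W μ a s * ∑ s' : Fin n → Bool, W μ b s' * φ (orv s s') := by
        rw [expect_boost μ a (fun z => ∑ s' : Fin n → Bool, W μ b s' * φ (orv z s'))]

end

section
variable {n : ℕ} (μ : Measure (Fin n → Bool)) [IsProbabilityMeasure μ]
  (f : (Fin n → Bool) → Option Bool)

lemma ind_nonneg (p : Prop) : 0 ≤ ind p := by unfold ind; split <;> norm_num
lemma ind_le_one (p : Prop) : ind p ≤ 1 := by unfold ind; split <;> norm_num
lemma ind_mono {p q : Prop} (h : p → q) : ind p ≤ ind q := by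
  unfold ind; split
  · rename_i hp; rw [if_pos (h hp)]
  · split <;> norm_num
lemma ind_mul (p q : Prop) : ind (p ∧ q) = ind p * ind q := by
  unfold ind; by_cases hp : p <;> by_cases hq : q <;>
    simp [hp, hq]
lemma ind_add_not (p : Prop) : ind p + ind (¬ p) = 1 := by
  unfold ind; by_cases hp : p <;> simp [hp]
lemma ind_of {p : Prop} (h : p) : ind p = 1 := by unfold ind; rw [if_pos h]
lemma ind_of_not {p : Prop} (h : ¬ p) : ind p = 0 := by unfold ind; rw [if_neg h]

lemma W_nonneg (a : ℕ) (x : Fin n → Bool) : 0 ≤ W μ a x := ENNReal.toReal_nonneg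

lemma W_sum (a : ℕ) : ∑ x : Fin n → Bool, W μ a x = 1 := by
  have h := boost_link μ a Set.univ
  simp only [Set.mem_univ, ind_of, mul_one] at h
  rw [← h, measure_univ, ENNReal.toReal_one]

noncomputable def PB (a : ℕ) (Q : (Fin n → Bool) → Prop) : ℝ :=
  ∑ x : Fin n → Bool, W μ a x * ind (Q x)

lemma PB_nonneg (a : ℕ) (Q : (Fin n → Bool) → Prop) : 0 ≤ PB μ a Q :=
  Finset.sum_nonneg fun x _ => mul_nonneg (W_nonneg μ a x) (ind_nonneg _)

lemma PB_le_one (a : ℕ) (Q : (Fin n → Bool) → Prop) : PB μ a Q ≤ 1 := by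
  rw [← W_sum μ a]
  exact Finset.sum_le_sum fun x _ =>
    (mul_le_of_le_one_right (W_nonneg μ a x) (ind_le_one _))

lemma PB_mono (a : ℕ) {Q R : (Fin n → Bool) → Prop} (h : ∀ x, Q x → R x) :
    PB μ a Q ≤ PB μ a R :=
  Finset.sum_le_sum fun x _ => mul_le_mul_of_nonneg_left (ind_mono (h x)) (W_nonneg μ a x)

lemma PB_compl (a : ℕ) (Q : (Fin n → Bool) → Prop) :
    PB μ a Q + PB μ a (fun x => ¬ Q x) = 1 := by
  unfold PB
  rw [← Finset.sum_add_distrib]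
  rw [← W_sum μ a]
  apply Finset.sum_congr rfl
  intro x _
  rw [← mul_add, ind_add_not, mul_one]

lemma boost_link' (a : ℕ) (Q : (Fin n → Bool) → Prop) :
    ((boost μ a) {x | Q x}).toReal = PB μ a Q := boost_link μ a {x | Q x}

lemma PB_or (ℓ ℓ' : ℕ) (Q : (Fin n → Bool) → Prop) :
    PB μ (ℓ+ℓ') Q
      = ∑ x : Fin n → Bool, W μ ℓ x * PB μ ℓ' (fun z => Q (orv x z)) := by
  unfold PB
  exact expect_add μ ℓ ℓ' (fun v => ind (Q v))

def wit (b : Bool) (S : Finset (Fin n)) (x : Fin n → Bool) : Prop :=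
  ∃ y, (∀ j ∉ S, y j = x j) ∧ f y = some b

lemma inflB_eq (S : Finset (Fin n)) (b : Bool) (ℓ : ℕ) :
    inflB μ f S (some b) ℓ = PB μ ℓ (wit f b S) := by
  unfold inflB infl
  exact boost_link μ ℓ _

lemma wit_mono {b : Bool} {S S' : Finset (Fin n)} (h : S ⊆ S') {x : Fin n → Bool} :
    wit f b S x → wit f b S' x := by
  rintro ⟨y, hy, hfy⟩
  exact ⟨y, fun j hj => hy j (fun hc => hj (h hc)), hfy⟩

lemma supp_orv_left (s s' : Fin n → Bool) : supp s ⊆ supp (orv s s') := by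
  intro i hi
  simp only [supp, Finset.mem_filter, Finset.mem_univ, true_and] at *
  simp [orv, hi]

lemma supp_orv_right (s s' : Fin n → Bool) : supp s' ⊆ supp (orv s s') := by
  intro i hi
  simp only [supp, Finset.mem_filter, Finset.mem_univ, true_and] at *
  simp [orv, hi]

lemma orv_comm (s s' : Fin n → Bool) : orv s s' = orv s' s := by
  funext i; exact Bool.or_comm _ _

noncomputable def Ub (b : Bool) (a : ℕ) (x : Fin n → Bool) : ℝ :=
  PB μ a (fun s => ¬ wit f b (supp s) x)

lemma Ub_nonneg (b : Bool) (a : ℕ) (x : Fin n → Bool) : 0 ≤ Ub μ f b a x := PB_nonneg μ a _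
lemma Ub_le_one (b : Bool) (a : ℕ) (x : Fin n → Bool) : Ub μ f b a x ≤ 1 := PB_le_one μ a _

lemma U_submul (b : Bool) (a c : ℕ) (x : Fin n → Bool) :
    Ub μ f b (a+c) x ≤ Ub μ f b a x * Ub μ f b c x := by
  unfold Ub PB
  rw [expect_add]
  have inner : ∀ s : Fin n → Bool,
      (∑ s' : Fin n → Bool, W μ c s' * ind (¬ wit f b (supp (orv s s')) x))
        ≤ ind (¬ wit f b (supp s) x) * ∑ s' : Fin n → Bool, W μ c s' * ind (¬ wit f b (supp s') x) := by
    intro s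
    rw [Finset.mul_sum]
    apply Finset.sum_le_sum
    intro s' _
    have himp : (¬ wit f b (supp (orv s s')) x) →
        (¬ wit f b (supp s) x) ∧ (¬ wit f b (supp s') x) := by
      intro h
      exact ⟨fun hw => h (wit_mono f (supp_orv_left s s') hw),
             fun hw => h (wit_mono f (supp_orv_right s s') hw)⟩
    calc W μ c s' * ind (¬ wit f b (supp (orv s s')) x)
        ≤ W μ c s' * ind ((¬ wit f b (supp s) x) ∧ (¬ wit f b (supp s') x)) :=
          mul_le_mul_of_nonneg_left (ind_mono himp) (W_nonneg μ c s')
      _ = ind (¬ wit f b (supp s) x) * (W μ c s' * ind (¬ wit f b (supp s') x)) := by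
          rw [ind_mul]; ring
  calc ∑ s : Fin n → Bool, W μ a s * ∑ s' : Fin n → Bool, W μ c s' * ind (¬ wit f b (supp (orv s s')) x)
      ≤ ∑ s : Fin n → Bool, W μ a s * (ind (¬ wit f b (supp s) x)
          * ∑ s' : Fin n → Bool, W μ c s' * ind (¬ wit f b (supp s') x)) := by
        apply Finset.sum_le_sum
        intro s _
        exact mul_le_mul_of_nonneg_left (inner s) (W_nonneg μ a s)
    _ = (∑ s : Fin n → Bool, W μ a s * ind (¬ wit f b (supp s) x))
          * ∑ s' : Fin n → Bool, W μ c s' * ind (¬ wit f b (supp s') x) := by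
        rw [Finset.sum_mul]
        apply Finset.sum_congr rfl
        intro s _; ring

lemma U_mono_add (b : Bool) (a c : ℕ) (x : Fin n → Bool) :
    Ub μ f b (a+c) x ≤ Ub μ f b a x := by
  calc Ub μ f b (a+c) x ≤ Ub μ f b a x * Ub μ f b c x := U_submul μ f b a c x
    _ ≤ Ub μ f b a x * 1 :=
      mul_le_mul_of_nonneg_left (Ub_le_one μ f b c x) (Ub_nonneg μ f b a x)
    _ = Ub μ f b a x := mul_one _

lemma U_le_of_le (b : Bool) {a a' : ℕ} (h : a ≤ a') (x : Fin n → Bool) :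
    Ub μ f b a' x ≤ Ub μ f b a x := by
  obtain ⟨c, rfl⟩ := Nat.exists_eq_add_of_le h
  exact U_mono_add μ f b a c x

lemma U_le_pow (b : Bool) (m a : ℕ) (x : Fin n → Bool) :
    Ub μ f b (m*a) x ≤ (Ub μ f b a x)^m := by
  induction m with
  | zero =>
      simp only [Nat.zero_mul, pow_zero]
      exact Ub_le_one μ f b 0 x
  | succ m ih =>
      have : (m+1)*a = a + m*a := by ring
      rw [this, pow_succ']
      calc Ub μ f b (a + m*a) x ≤ Ub μ f b a x * Ub μ f b (m*a) x := U_submul μ f b a (m*a) x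
        _ ≤ Ub μ f b a x * (Ub μ f b a x)^m :=
          mul_le_mul_of_nonneg_left ih (Ub_nonneg μ f b a x)

lemma U_le_V (b : Bool) (ℓ' : ℕ) (x : Fin n → Bool) :
    Ub μ f b ℓ' x ≤ PB μ ℓ' (fun z => ¬ (f (orv x z) = some b)) := by
  apply PB_mono
  intro z hz hfz
  apply hz
  refine ⟨orv x z, ?_, hfz⟩
  intro j hj
  have hzj : z j = false := by
    simp only [supp, Finset.mem_filter, Finset.mem_univ, true_and] at hj
    simpa using hj
  simp only [orv, hzj, Bool.or_false]

end

lemma exp_pow_bound {p : ℝ} (m : ℕ) (hp0 : 0 ≤ p) (hp1 : p ≤ 1) (h : (1/2:ℝ) < (1-p)^m) :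
    (m:ℝ)*p < 1 := by
  have h1 : (1-p:ℝ) ≤ Real.exp (-p) := by
    have := Real.add_one_le_exp (-p); linarith
  have h2 : (1-p)^m ≤ Real.exp (-p)^m := pow_le_pow_left₀ (by linarith) h1 m
  rw [← Real.exp_nat_mul] at h2
  have h3 : (1/2:ℝ) < Real.exp ((m:ℝ)*(-p)) := lt_of_lt_of_le h h2
  have h4 : Real.log (1/2) < (m:ℝ)*(-p) := by
    have := Real.exp_log (by norm_num : (0:ℝ) < 1/2)
    rw [← this] at h3
    exact Real.exp_lt_exp.mp h3
  have h5 : Real.log (1/2) = - Real.log 2 := by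
    rw [one_div, Real.log_inv]
  have h6 : Real.log 2 < 1 := by
    have := Real.log_two_lt_d9; linarith
  nlinarith

section
variable {n : ℕ} (μ : Measure (Fin n → Bool)) [IsProbabilityMeasure μ]
  (f : (Fin n → Bool) → Option Bool)

lemma keyE {ε : ℝ} (hε : 0 < ε) (κ : ℕ) (b : Bool) (x : Fin n → Bool) (ℓ' : ℕ)
    (hm1 : 1 ≤ κ/ℓ') (hminv : 1/((κ/ℓ' : ℕ) : ℝ) ≤ ε/32)
    (hbad : 1/2 < Ub μ f b κ x) :
    PB μ ℓ' (fun z => f (orv x z) = some b) ≤ ε/32 := by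
  set m := κ/ℓ' with hm
  set p := PB μ ℓ' (fun z => f (orv x z) = some b) with hp
  have hp0 : 0 ≤ p := PB_nonneg μ ℓ' _
  have hp1 : p ≤ 1 := PB_le_one μ ℓ' _
  have hq : PB μ ℓ' (fun z => ¬ (f (orv x z) = some b)) = 1 - p := by
    have := PB_compl μ ℓ' (fun z => f (orv x z) = some b)
    linarith
  have hchain : Ub μ f b κ x ≤ (1-p)^m := by
    calc Ub μ f b κ x ≤ Ub μ f b (m*ℓ') x :=
          U_le_of_le μ f b (Nat.div_mul_le_self κ ℓ') x
      _ ≤ (Ub μ f b ℓ' x)^m := U_le_pow μ f b m ℓ' x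
      _ ≤ (PB μ ℓ' (fun z => ¬ (f (orv x z) = some b)))^m :=
          pow_le_pow_left₀ (Ub_nonneg μ f b ℓ' x) (U_le_V μ f b ℓ' x) m
      _ = (1-p)^m := by rw [hq]
  have hhalf : (1/2:ℝ) < (1-p)^m := lt_of_lt_of_le hbad hchain
  have hmp : (m:ℝ)*p < 1 := exp_pow_bound m hp0 hp1 hhalf
  have hmpos : (0:ℝ) < (m:ℝ) := by
    have : (1:ℝ) ≤ (m:ℝ) := by exact_mod_cast hm1
    linarith
  have : p < 1/(m:ℝ) := by
    rw [lt_div_iff₀ hmpos]; linarith [hmp]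
  linarith

end

lemma ind_le_three {p a b c : Prop} (h : p → a ∨ b ∨ c) : ind p ≤ ind a + ind b + ind c := by
  unfold ind
  by_cases hp : p
  · rcases h hp with h' | h' | h' <;> split_ifs <;> simp_all <;> linarith [ (0:ℝ) ]
  · split_ifs <;> simp_all <;> linarith

lemma ind_two_le {p q r : Prop} (hp : p → r) (hq : q → r) (hpq : ¬(p ∧ q)) :
    ind p + ind q ≤ ind r := by
  unfold ind
  by_cases hp' : p <;> by_cases hq' : q <;> split_ifs <;> simp_all

section
variable {n : ℕ} (μ : Measure (Fin n → Bool)) [IsProbabilityMeasure μ]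
  (f : (Fin n → Bool) → Option Bool)

lemma dichotomy {ε : ℝ} (hε : 0 < ε) (t κ : ℕ) (ht : 1 ≤ t)
    (hkey : ∀ (b : Bool) (x : Fin n → Bool) (ℓ' : ℕ), 1 ≤ ℓ' → ℓ' ≤ t →
      1/2 < Ub μ f b κ x → PB μ ℓ' (fun z => f (orv x z) = some b) ≤ ε/32)
    (hdag : ∀ ℓ, 1 ≤ ℓ → ℓ ≤ 2*t → PB μ ℓ (fun x => f x = none) ≤ (ε/4)^2) :
    ∃ b : Bool, ∀ ℓ, 1 ≤ ℓ → ℓ ≤ t → PB μ ℓ (fun x => 1/2 < Ub μ f b κ x) < ε/2 := by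
  by_contra hcon
  push_neg at hcon
  obtain ⟨ℓ₀, h1ℓ₀, hℓ₀t, hβ₀⟩ := hcon false
  obtain ⟨ℓ₁, h1ℓ₁, hℓ₁t, hβ₁⟩ := hcon true
  set B0 : (Fin n → Bool) → Prop := fun x => 1/2 < Ub μ f false κ x with hB0
  set B1 : (Fin n → Bool) → Prop := fun x => 1/2 < Ub μ f true κ x with hB1
  set β₀ := PB μ ℓ₀ B0 with hβ₀def
  set β₁ := PB μ ℓ₁ B1 with hβ₁def
  -- the three double sums
  set S1 := ∑ x : Fin n → Bool, ∑ z : Fin n → Bool,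
      W μ ℓ₀ x * (W μ ℓ₁ z * ind (B0 x ∧ B1 z ∧ f (orv x z) = some true)) with hS1
  set S0 := ∑ x : Fin n → Bool, ∑ z : Fin n → Bool,
      W μ ℓ₀ x * (W μ ℓ₁ z * ind (B0 x ∧ B1 z ∧ f (orv x z) = some false)) with hS0
  -- product formula
  have hprod : β₀ * β₁ = ∑ x : Fin n → Bool, ∑ z : Fin n → Bool,
      W μ ℓ₀ x * (W μ ℓ₁ z * ind (B0 x ∧ B1 z)) := by
    rw [hβ₀def, hβ₁def]
    unfold PB
    rw [Finset.sum_mul_sum]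
    apply Finset.sum_congr rfl; intro x _
    apply Finset.sum_congr rfl; intro z _
    rw [ind_mul]; ring
  -- c1 : S0 + S1 ≤ β₀ * β₁
  have c1 : S0 + S1 ≤ β₀ * β₁ := by
    rw [hS0, hS1, hprod, ← Finset.sum_add_distrib]
    apply Finset.sum_le_sum; intro x _
    rw [← Finset.sum_add_distrib]
    apply Finset.sum_le_sum; intro z _
    rw [← mul_add, ← mul_add]
    apply mul_le_mul_of_nonneg_left _ (W_nonneg μ ℓ₀ x)
    apply mul_le_mul_of_nonneg_left _ (W_nonneg μ ℓ₁ z)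
    apply ind_two_le
    · rintro ⟨h0, h1, _⟩; exact ⟨h0, h1⟩
    · rintro ⟨h0, h1, _⟩; exact ⟨h0, h1⟩
    · rintro ⟨⟨_, _, hf⟩, ⟨_, _, hf'⟩⟩; rw [hf] at hf'; exact (by simp at hf')
  -- c2 : β₀ * β₁ ≤ S1 + (ε/32)*β₀ + (ε/4)^2
  have c2 : β₀ * β₁ ≤ S1 + (ε/32)*β₀ + (ε/4)^2 := by
    have step1 : β₀ * β₁ ≤ S1
        + (∑ x : Fin n → Bool, ∑ z : Fin n → Bool,
            W μ ℓ₀ x * (W μ ℓ₁ z * ind (B0 x ∧ f (orv x z) = some false)))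
        + (∑ x : Fin n → Bool, ∑ z : Fin n → Bool,
            W μ ℓ₀ x * (W μ ℓ₁ z * ind (f (orv x z) = none))) := by
      rw [hprod, hS1, ← Finset.sum_add_distrib, ← Finset.sum_add_distrib]
      apply Finset.sum_le_sum; intro x _
      rw [← Finset.sum_add_distrib, ← Finset.sum_add_distrib]
      apply Finset.sum_le_sum; intro z _
      have : W μ ℓ₀ x * (W μ ℓ₁ z * ind (B0 x ∧ B1 z ∧ f (orv x z) = some true))
          + W μ ℓ₀ x * (W μ ℓ₁ z * ind (B0 x ∧ f (orv x z) = some false))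
          + W μ ℓ₀ x * (W μ ℓ₁ z * ind (f (orv x z) = none))
          = W μ ℓ₀ x * (W μ ℓ₁ z * (ind (B0 x ∧ B1 z ∧ f (orv x z) = some true)
              + ind (B0 x ∧ f (orv x z) = some false) + ind (f (orv x z) = none))) := by ring
      rw [this]
      apply mul_le_mul_of_nonneg_left _ (W_nonneg μ ℓ₀ x)
      apply mul_le_mul_of_nonneg_left _ (W_nonneg μ ℓ₁ z)
      apply ind_le_three
      rintro ⟨h0, h1⟩
      rcases hfv : f (orv x z) with _ | bv
      · right; right; rfl
      · cases bv
        · right; left; exact ⟨h0, rfl⟩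
        · left; exact ⟨h0, h1, rfl⟩
    have step2 : (∑ x : Fin n → Bool, ∑ z : Fin n → Bool,
            W μ ℓ₀ x * (W μ ℓ₁ z * ind (B0 x ∧ f (orv x z) = some false)))
          ≤ (ε/32)*β₀ := by
      have heq : ∀ x : Fin n → Bool, (∑ z : Fin n → Bool,
            W μ ℓ₀ x * (W μ ℓ₁ z * ind (B0 x ∧ f (orv x z) = some false)))
          = W μ ℓ₀ x * (ind (B0 x) * PB μ ℓ₁ (fun z => f (orv x z) = some false)) := by
        intro x
        unfold PB
        rw [Finset.mul_sum, Finset.mul_sum]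
        apply Finset.sum_congr rfl; intro z _
        rw [ind_mul]; ring
      calc (∑ x : Fin n → Bool, ∑ z : Fin n → Bool,
            W μ ℓ₀ x * (W μ ℓ₁ z * ind (B0 x ∧ f (orv x z) = some false)))
          = ∑ x : Fin n → Bool,
              W μ ℓ₀ x * (ind (B0 x) * PB μ ℓ₁ (fun z => f (orv x z) = some false)) := by
            apply Finset.sum_congr rfl; intro x _; exact heq x
        _ ≤ ∑ x : Fin n → Bool, W μ ℓ₀ x * (ind (B0 x) * (ε/32)) := by
            apply Finset.sum_le_sum; intro x _
            apply mul_le_mul_of_nonneg_left _ (W_nonneg μ ℓ₀ x)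
            by_cases hb : B0 x
            · exact mul_le_mul_of_nonneg_left (hkey false x ℓ₁ h1ℓ₁ hℓ₁t hb) (ind_nonneg _)
            · rw [ind_of_not hb, zero_mul, zero_mul]
        _ = (ε/32)*β₀ := by
            rw [hβ₀def]; unfold PB; rw [Finset.mul_sum]
            apply Finset.sum_congr rfl; intro x _; ring
    have step3 : (∑ x : Fin n → Bool, ∑ z : Fin n → Bool,
            W μ ℓ₀ x * (W μ ℓ₁ z * ind (f (orv x z) = none)))
          ≤ (ε/4)^2 := by
      have heq : (∑ x : Fin n → Bool, ∑ z : Fin n → Bool,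
            W μ ℓ₀ x * (W μ ℓ₁ z * ind (f (orv x z) = none)))
          = PB μ (ℓ₀+ℓ₁) (fun v => f v = none) := by
        rw [PB_or]
        apply Finset.sum_congr rfl; intro x _
        unfold PB; rw [Finset.mul_sum]
      rw [heq]
      exact hdag (ℓ₀+ℓ₁) (by omega) (by omega)
    linarith
  -- c3 : β₀ * β₁ ≤ S0 + (ε/32)*β₁ + (ε/4)^2
  have c3 : β₀ * β₁ ≤ S0 + (ε/32)*β₁ + (ε/4)^2 := by
    have step1 : β₀ * β₁ ≤ S0
        + (∑ x : Fin n → Bool, ∑ z : Fin n → Bool,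
            W μ ℓ₀ x * (W μ ℓ₁ z * ind (B1 z ∧ f (orv x z) = some true)))
        + (∑ x : Fin n → Bool, ∑ z : Fin n → Bool,
            W μ ℓ₀ x * (W μ ℓ₁ z * ind (f (orv x z) = none))) := by
      rw [hprod, hS0, ← Finset.sum_add_distrib, ← Finset.sum_add_distrib]
      apply Finset.sum_le_sum; intro x _
      rw [← Finset.sum_add_distrib, ← Finset.sum_add_distrib]
      apply Finset.sum_le_sum; intro z _
      have : W μ ℓ₀ x * (W μ ℓ₁ z * ind (B0 x ∧ B1 z ∧ f (orv x z) = some false))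
          + W μ ℓ₀ x * (W μ ℓ₁ z * ind (B1 z ∧ f (orv x z) = some true))
          + W μ ℓ₀ x * (W μ ℓ₁ z * ind (f (orv x z) = none))
          = W μ ℓ₀ x * (W μ ℓ₁ z * (ind (B0 x ∧ B1 z ∧ f (orv x z) = some false)
              + ind (B1 z ∧ f (orv x z) = some true) + ind (f (orv x z) = none))) := by ring
      rw [this]
      apply mul_le_mul_of_nonneg_left _ (W_nonneg μ ℓ₀ x)
      apply mul_le_mul_of_nonneg_left _ (W_nonneg μ ℓ₁ z)
      apply ind_le_three
      rintro ⟨h0, h1⟩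
      rcases hfv : f (orv x z) with _ | bv
      · right; right; rfl
      · cases bv
        · left; exact ⟨h0, h1, rfl⟩
        · right; left; exact ⟨h1, rfl⟩
    have step2 : (∑ x : Fin n → Bool, ∑ z : Fin n → Bool,
            W μ ℓ₀ x * (W μ ℓ₁ z * ind (B1 z ∧ f (orv x z) = some true)))
          ≤ (ε/32)*β₁ := by
      rw [Finset.sum_comm]
      have heq : ∀ z : Fin n → Bool, (∑ x : Fin n → Bool,
            W μ ℓ₀ x * (W μ ℓ₁ z * ind (B1 z ∧ f (orv x z) = some true)))
          = W μ ℓ₁ z * (ind (B1 z) * PB μ ℓ₀ (fun x => f (orv z x) = some true)) := by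
        intro z
        unfold PB
        rw [Finset.mul_sum, Finset.mul_sum]
        apply Finset.sum_congr rfl; intro x _
        rw [orv_comm x z] at *
        rw [ind_mul]; ring
      calc (∑ z : Fin n → Bool, ∑ x : Fin n → Bool,
            W μ ℓ₀ x * (W μ ℓ₁ z * ind (B1 z ∧ f (orv x z) = some true)))
          = ∑ z : Fin n → Bool,
              W μ ℓ₁ z * (ind (B1 z) * PB μ ℓ₀ (fun x => f (orv z x) = some true)) := by
            apply Finset.sum_congr rfl; intro z _; exact heq z
        _ ≤ ∑ z : Fin n → Bool, W μ ℓ₁ z * (ind (B1 z) * (ε/32)) := by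
            apply Finset.sum_le_sum; intro z _
            apply mul_le_mul_of_nonneg_left _ (W_nonneg μ ℓ₁ z)
            by_cases hb : B1 z
            · exact mul_le_mul_of_nonneg_left (hkey true z ℓ₀ h1ℓ₀ hℓ₀t hb) (ind_nonneg _)
            · rw [ind_of_not hb, zero_mul, zero_mul]
        _ = (ε/32)*β₁ := by
            rw [hβ₁def]; unfold PB; rw [Finset.mul_sum]
            apply Finset.sum_congr rfl; intro z _; ring
    have step3 : (∑ x : Fin n → Bool, ∑ z : Fin n → Bool,
            W μ ℓ₀ x * (W μ ℓ₁ z * ind (f (orv x z) = none)))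
          ≤ (ε/4)^2 := by
      have heq : (∑ x : Fin n → Bool, ∑ z : Fin n → Bool,
            W μ ℓ₀ x * (W μ ℓ₁ z * ind (f (orv x z) = none)))
          = PB μ (ℓ₀+ℓ₁) (fun v => f v = none) := by
        rw [PB_or]
        apply Finset.sum_congr rfl; intro x _
        unfold PB; rw [Finset.mul_sum]
      rw [heq]
      exact hdag (ℓ₀+ℓ₁) (by omega) (by omega)
    linarith
  -- now derive the contradiction
  have hmain : β₀ * β₁ ≤ (ε/32)*(β₀+β₁) + 2*(ε/4)^2 := by linarith
  have hq : (0:ℝ) ≤ (β₀ - ε/2) * (β₁ - ε/2) :=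
    mul_nonneg (by linarith) (by linarith)
  nlinarith
end

section
variable {n : ℕ} (μ : Measure (Fin n → Bool)) [IsProbabilityMeasure μ]

lemma PB_union (a : ℕ) (I : Finset ℕ) (Q : ℕ → (Fin n → Bool) → Prop) :
    PB μ a (fun s => ∃ ℓ ∈ I, Q ℓ s) ≤ ∑ ℓ ∈ I, PB μ a (Q ℓ) := by
  unfold PB
  rw [Finset.sum_comm]
  apply Finset.sum_le_sum
  intro s _
  rw [← Finset.mul_sum]
  apply mul_le_mul_of_nonneg_left _ (W_nonneg μ a s)
  by_cases h : ∃ ℓ ∈ I, Q ℓ s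
  · obtain ⟨ℓ₀, hmem, hQ⟩ := h
    rw [ind_of ⟨ℓ₀, hmem, hQ⟩]
    calc (1:ℝ) = ind (Q ℓ₀ s) := (ind_of hQ).symm
      _ ≤ ∑ ℓ ∈ I, ind (Q ℓ s) :=
        Finset.single_le_sum (f := fun ℓ => ind (Q ℓ s)) (fun i _ => ind_nonneg _) hmem
  · rw [ind_of_not h]
    exact Finset.sum_nonneg fun i _ => ind_nonneg _

end

section
variable {n : ℕ} (μ : Measure (Fin n → Bool)) [IsProbabilityMeasure μ]
  (f : (Fin n → Bool) → Option Bool)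

noncomputable def Gl (b : Bool) (κ ℓ : ℕ) (s : Fin n → Bool) : ℝ :=
  ∑ x : Fin n → Bool,
    W μ ℓ x * (ind (¬ (1/2 < Ub μ f b κ x)) * ind (¬ wit f b (supp s) x))

lemma Gl_nonneg (b : Bool) (κ ℓ : ℕ) (s : Fin n → Bool) : 0 ≤ Gl μ f b κ ℓ s :=
  Finset.sum_nonneg fun x _ => mul_nonneg (W_nonneg μ ℓ x)
    (mul_nonneg (ind_nonneg _) (ind_nonneg _))

lemma Gl_decomp (b : Bool) (κ ℓ : ℕ) (s : Fin n → Bool) :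
    PB μ ℓ (fun x => ¬ wit f b (supp s) x)
      ≤ PB μ ℓ (fun x => 1/2 < Ub μ f b κ x) + Gl μ f b κ ℓ s := by
  unfold PB Gl
  rw [← Finset.sum_add_distrib]
  apply Finset.sum_le_sum
  intro x _
  rw [← mul_add]
  apply mul_le_mul_of_nonneg_left _ (W_nonneg μ ℓ x)
  by_cases hbad : 1/2 < Ub μ f b κ x
  · rw [ind_of hbad]
    have h1 := ind_le_one (¬ wit f b (supp s) x)
    have h2 := mul_nonneg (ind_nonneg (¬ (1/2 < Ub μ f b κ x)))
      (ind_nonneg (¬ wit f b (supp s) x))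
    linarith
  · rw [ind_of_not hbad, ind_of (show ¬ (1/2 < Ub μ f b κ x) from hbad), one_mul]
    linarith [ind_nonneg (¬ wit f b (supp s) x), le_refl (ind (¬ wit f b (supp s) x))]

lemma Gl_swap (b : Bool) (κ ℓ k : ℕ) :
    ∑ s : Fin n → Bool, W μ k s * Gl μ f b κ ℓ s
      = ∑ x : Fin n → Bool,
          W μ ℓ x * (ind (¬ (1/2 < Ub μ f b κ x)) * Ub μ f b k x) := by
  unfold Gl
  calc ∑ s : Fin n → Bool, W μ k s * ∑ x : Fin n → Bool,
        W μ ℓ x * (ind (¬ (1/2 < Ub μ f b κ x)) * ind (¬ wit f b (supp s) x))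
      = ∑ s : Fin n → Bool, ∑ x : Fin n → Bool, W μ k s *
          (W μ ℓ x * (ind (¬ (1/2 < Ub μ f b κ x)) * ind (¬ wit f b (supp s) x))) := by
        apply Finset.sum_congr rfl; intro s _; rw [Finset.mul_sum]
    _ = ∑ x : Fin n → Bool, ∑ s : Fin n → Bool, W μ k s *
          (W μ ℓ x * (ind (¬ (1/2 < Ub μ f b κ x)) * ind (¬ wit f b (supp s) x))) :=
        Finset.sum_comm
    _ = ∑ x : Fin n → Bool,
          W μ ℓ x * (ind (¬ (1/2 < Ub μ f b κ x)) * Ub μ f b k x) := by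
        apply Finset.sum_congr rfl; intro x _
        unfold Ub PB
        rw [Finset.mul_sum, Finset.mul_sum]
        apply Finset.sum_congr rfl; intro s _
        ring

lemma Gl_expect_bound (b : Bool) (κ ℓ k r : ℕ) (hrκ : r*κ ≤ k) :
    ∑ s : Fin n → Bool, W μ k s * Gl μ f b κ ℓ s ≤ ((1:ℝ)/2)^r := by
  rw [Gl_swap]
  calc ∑ x : Fin n → Bool,
        W μ ℓ x * (ind (¬ (1/2 < Ub μ f b κ x)) * Ub μ f b k x)
      ≤ ∑ x : Fin n → Bool, W μ ℓ x * ((1:ℝ)/2)^r := by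
        apply Finset.sum_le_sum
        intro x _
        apply mul_le_mul_of_nonneg_left _ (W_nonneg μ ℓ x)
        by_cases hbad : 1/2 < Ub μ f b κ x
        · rw [ind_of_not (show ¬ ¬ (1/2 < Ub μ f b κ x) from fun h => h hbad), zero_mul]
          positivity
        · rw [ind_of (show ¬ (1/2 < Ub μ f b κ x) from hbad), one_mul]
          have hU12 : Ub μ f b κ x ≤ 1/2 := not_lt.mp hbad
          calc Ub μ f b k x ≤ Ub μ f b (r*κ) x := U_le_of_le μ f b hrκ x
            _ ≤ (Ub μ f b κ x)^r := U_le_pow μ f b r κ x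
            _ ≤ ((1:ℝ)/2)^r := pow_le_pow_left₀ (Ub_nonneg μ f b κ x) hU12 r
      _ = ((1:ℝ)/2)^r := by
        rw [← Finset.sum_mul, W_sum, one_mul]

end

/-- same as Statement 10 but `f` may also take a failure value `†`
(modelled by `none : Option Bool`), provided `Pr_{μ^(ℓ)}[f = †] < (ε/4)²` for all `ℓ ≤ 2t`. -/
theorem boolean_boosted_influence_dagger :
    ∃ C : ℝ, C > 0 ∧
      ∀ n : ℕ, ∀ μ : Measure (Fin n → Bool), IsProbabilityMeasure μ →
      ∀ f : (Fin n → Bool) → Option Bool,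
      ∀ t : ℕ, 1 ≤ t →
      ∀ ε : ℝ, 0 < ε → ε ≤ 1/2 →
      ∀ k : ℕ, (k : ℝ) ≥ C * ((t : ℝ)/ε) * Real.logb 2 (2*t/ε) →
      (∀ ℓ : ℕ, 1 ≤ ℓ → ℓ ≤ 2*t →
        ((boost μ ℓ) {x | f x = none}).toReal < (ε/4)^2) →
      ∃ b : Bool,
        ((boost μ k) {x | ∀ ℓ : ℕ, 1 ≤ ℓ → ℓ ≤ t →
            inflB μ f (supp x) (some b) ℓ ≥ 1 - ε}).toReal ≥ 1 - ε := by
  refine ⟨512, by norm_num, ?_⟩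
  intro n μ hμ f t ht ε hε hε2 k hk hdag
  haveI := hμ
  -- basic real facts
  have ht1 : (1:ℝ) ≤ (t:ℝ) := by exact_mod_cast ht
  have hεinv : (2:ℝ) ≤ 1/ε := by rw [le_div_iff₀ hε]; linarith
  -- dagger hypothesis in PB form
  have hdagPB : ∀ ℓ, 1 ≤ ℓ → ℓ ≤ 2*t → PB μ ℓ (fun x => f x = none) ≤ (ε/4)^2 := by
    intro ℓ h1 h2
    have := hdag ℓ h1 h2
    rw [boost_link' μ ℓ (fun x => f x = none)] at this
    linarith
  -- numeric setup
  set c : ℕ := ⌈1/ε⌉₊ with hcdef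
  set κ : ℕ := 64*t*c with hκdef
  set r : ℕ := k/κ with hrdef
  have hc1 : 1/ε ≤ (c:ℝ) := Nat.le_ceil _
  have hc2 : (c:ℝ) ≤ 2/ε := by
    have h := Nat.ceil_lt_add_one (show (0:ℝ) ≤ 1/ε by positivity)
    have h2 : 2/ε = 1/ε + 1/ε := by ring
    have : (c:ℝ) < 1/ε + 1 := h
    linarith
  have hcpos : 1 ≤ c := by
    have : (0:ℝ) < c := lt_of_lt_of_le (by linarith) hc1
    exact_mod_cast Nat.one_le_iff_ne_zero.mpr (by intro h; rw [h] at this; simp at this)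
  have hκpos : 0 < κ := by
    have : 0 < 64*t*c := by positivity
    omega
  have hκR : (κ:ℝ) = 64*(t:ℝ)*(c:ℝ) := by rw [hκdef]; push_cast; ring
  have hκlow : 64*(t:ℝ)/ε ≤ (κ:ℝ) := by
    rw [hκR]
    calc 64*(t:ℝ)/ε = 64*(t:ℝ)*(1/ε) := by ring
      _ ≤ 64*(t:ℝ)*(c:ℝ) := by
        apply mul_le_mul_of_nonneg_left hc1 (by positivity)
  have hκhigh : (κ:ℝ) ≤ 128*(t:ℝ)/ε := by
    rw [hκR]
    calc 64*(t:ℝ)*(c:ℝ) ≤ 64*(t:ℝ)*(2/ε) := by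
          apply mul_le_mul_of_nonneg_left hc2 (by positivity)
      _ = 128*(t:ℝ)/ε := by ring
  -- the numeric facts needed by keyE
  have hmfacts : ∀ ℓ' : ℕ, 1 ≤ ℓ' → ℓ' ≤ t → 1 ≤ κ/ℓ' ∧ 1/((κ/ℓ' : ℕ) : ℝ) ≤ ε/32 := by
    intro ℓ' h1 h2
    have hℓ'pos : 0 < ℓ' := h1
    have hℓκ : ℓ' ≤ κ := by
      calc ℓ' ≤ t := h2
        _ ≤ 64*t*c := by nlinarith [hcpos, ht]
        _ = κ := hκdef.symm
    have hm1 : 1 ≤ κ/ℓ' := (Nat.one_le_div_iff hℓ'pos).mpr hℓκ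
    refine ⟨hm1, ?_⟩
    set m := κ/ℓ' with hmdef
    -- (m:ℝ) > κ/ℓ' - 1
    have hmod : ℓ' * m + κ % ℓ' = κ := Nat.div_add_mod κ ℓ'
    have hmodlt : κ % ℓ' < ℓ' := Nat.mod_lt κ hℓ'pos
    have hre : (κ:ℝ) < (ℓ':ℝ) * m + ℓ' := by
      have h1' : (κ:ℝ) = (ℓ':ℝ)*m + (κ % ℓ' : ℕ) := by exact_mod_cast hmod.symm
      have h2' : ((κ % ℓ' : ℕ):ℝ) < (ℓ':ℝ) := by exact_mod_cast hmodlt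
      linarith
    have hℓ'R : (1:ℝ) ≤ (ℓ':ℝ) := by exact_mod_cast h1
    have hℓ'tR : (ℓ':ℝ) ≤ (t:ℝ) := by exact_mod_cast h2
    -- κ/ℓ' ≥ 64/ε
    have hκℓ : 64/ε ≤ (κ:ℝ)/(ℓ':ℝ) := by
      rw [le_div_iff₀ (by linarith : (0:ℝ) < (ℓ':ℝ))]
      calc 64/ε*(ℓ':ℝ) ≤ 64/ε*(t:ℝ) := by
            apply mul_le_mul_of_nonneg_left hℓ'tR (by positivity)
        _ = 64*(t:ℝ)/ε := by ring
        _ ≤ (κ:ℝ) := hκlow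
    have hmbig : 32/ε ≤ (m:ℝ) := by
      have hA : (κ:ℝ)/(ℓ':ℝ) < (m:ℝ) + 1 := by
        rw [div_lt_iff₀ (by linarith : (0:ℝ) < (ℓ':ℝ))]
        nlinarith
      have h32 : (64:ℝ)/ε = 32/ε + 32/ε := by ring
      have h321 : (1:ℝ) ≤ 32/ε := by
        calc (1:ℝ) ≤ 32*2 := by norm_num
          _ ≤ 32*(1/ε) := by linarith
          _ = 32/ε := by ring
      linarith
    have hm0 : (0:ℝ) < (m:ℝ) := by
      have : (0:ℝ) < 32/ε := by positivity
      linarith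
    rw [div_le_div_iff₀ hm0 (by norm_num : (0:ℝ) < 32)]
    calc 1*32 = (32:ℝ) := by ring
      _ ≤ ε * (32/ε) := by rw [mul_div_cancel₀]; exact ne_of_gt hε
      _ ≤ ε * m := by apply mul_le_mul_of_nonneg_left hmbig (le_of_lt hε)
  -- L facts
  set L : ℝ := Real.logb 2 (2*(t:ℝ)/ε) with hLdef
  have hε2ε : 2*ε ≤ 1 := by
    have := (le_div_iff₀ hε).mp hεinv
    linarith
  have harg4 : (4:ℝ) ≤ 2*(t:ℝ)/ε := by
    rw [le_div_iff₀ hε]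
    nlinarith
  have hargpos : (0:ℝ) < 2*(t:ℝ)/ε := by positivity
  have hL2 : (2:ℝ) ≤ L := by
    calc (2:ℝ) = Real.logb 2 4 := by
          rw [show (4:ℝ) = 2^(2:ℕ) by norm_num, Real.logb_pow, Real.logb_self_eq_one] <;> norm_num
      _ ≤ L := Real.logb_le_logb_of_le (by norm_num) (by norm_num) harg4
  have h2L : (2:ℝ)^L = 2*(t:ℝ)/ε := Real.rpow_logb (by norm_num) (by norm_num) hargpos
  -- r facts
  have hrκ : r*κ ≤ k := Nat.div_mul_le_self k κ
  have hkR : (512:ℝ)*((t:ℝ)/ε)*L ≤ (k:ℝ) := hk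
  have hLpos : (0:ℝ) < L := by linarith
  have hkκ : 4*L*(κ:ℝ) ≤ (k:ℝ) := by
    calc 4*L*(κ:ℝ) ≤ 4*L*(128*(t:ℝ)/ε) := by
          apply mul_le_mul_of_nonneg_left hκhigh (by positivity)
      _ = 512*((t:ℝ)/ε)*L := by ring
      _ ≤ (k:ℝ) := hkR
  have hr2L : 2*L ≤ (r:ℝ) := by
    have hmod : κ * r + k % κ = k := Nat.div_add_mod k κ
    have hmodlt : k % κ < κ := Nat.mod_lt k hκpos
    have hre : (k:ℝ) < (κ:ℝ)*(r:ℝ) + (κ:ℝ) := by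
      have h1' : (k:ℝ) = (κ:ℝ)*(r:ℝ) + ((k % κ : ℕ):ℝ) := by exact_mod_cast hmod.symm
      have h2' : ((k % κ : ℕ):ℝ) < (κ:ℝ) := by exact_mod_cast hmodlt
      linarith
    have hκRpos : (0:ℝ) < (κ:ℝ) := by exact_mod_cast hκpos
    -- 4L κ ≤ k < κ r + κ  ⇒ 4L - 1 < r ⇒ 2L ≤ r since 2L ≥ 1... (4L-1) - 2L = 2L-1 ≥ 3
    nlinarith
  have hpow : ((1:ℝ)/2)^r ≤ (ε/(2*(t:ℝ)))^2 := by
    have h2r : ((2:ℝ))^(r:ℕ) = (2:ℝ)^((r:ℕ):ℝ) := by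
      rw [Real.rpow_natCast]
    have hA : (2*(t:ℝ)/ε)^(2:ℕ) ≤ (2:ℝ)^(r:ℕ) := by
      calc (2*(t:ℝ)/ε)^(2:ℕ) = ((2:ℝ)^L)^(2:ℕ) := by rw [h2L]
        _ = (2:ℝ)^(L*2) := by
            rw [← Real.rpow_natCast ((2:ℝ)^L) 2, ← Real.rpow_mul (by norm_num)]
            norm_num
        _ ≤ (2:ℝ)^((r:ℕ):ℝ) := by
            apply Real.rpow_le_rpow_of_exponent_le (by norm_num)
            linarith
        _ = (2:ℝ)^(r:ℕ) := h2r.symm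
    have hpos2r : (0:ℝ) < (2:ℝ)^(r:ℕ) := by positivity
    have hposarg : (0:ℝ) < (2*(t:ℝ)/ε)^(2:ℕ) := by positivity
    have hinv : ((2:ℝ)^(r:ℕ))⁻¹ ≤ ((2*(t:ℝ)/ε)^(2:ℕ))⁻¹ :=
      inv_anti₀ hposarg hA
    calc ((1:ℝ)/2)^r = ((2:ℝ)^(r:ℕ))⁻¹ := by
          rw [one_div, inv_pow]
      _ ≤ ((2*(t:ℝ)/ε)^(2:ℕ))⁻¹ := hinv
      _ = (ε/(2*(t:ℝ)))^2 := by
          rw [← inv_pow, inv_div]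
  -- choose b via the dichotomy
  have hkey : ∀ (b : Bool) (x : Fin n → Bool) (ℓ' : ℕ), 1 ≤ ℓ' → ℓ' ≤ t →
      1/2 < Ub μ f b κ x → PB μ ℓ' (fun z => f (orv x z) = some b) ≤ ε/32 := by
    intro b x ℓ' h1 h2 hbad
    obtain ⟨hm1, hminv⟩ := hmfacts ℓ' h1 h2
    exact keyE μ f hε κ b x ℓ' hm1 hminv hbad
  obtain ⟨b, hb⟩ := dichotomy μ f hε t κ ht hkey hdagPB
  refine ⟨b, ?_⟩
  rw [boost_link' μ k (fun s => ∀ ℓ : ℕ, 1 ≤ ℓ → ℓ ≤ t →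
      inflB μ f (supp s) (some b) ℓ ≥ 1 - ε)]
  have hcompl := PB_compl μ k (fun s => ∀ ℓ : ℕ, 1 ≤ ℓ → ℓ ≤ t →
      inflB μ f (supp s) (some b) ℓ ≥ 1 - ε)
  have hmain : PB μ k (fun s => ¬ ∀ ℓ : ℕ, 1 ≤ ℓ → ℓ ≤ t →
      inflB μ f (supp s) (some b) ℓ ≥ 1 - ε) ≤ ε := by
    have hsub : PB μ k (fun s => ¬ ∀ ℓ : ℕ, 1 ≤ ℓ → ℓ ≤ t →
        inflB μ f (supp s) (some b) ℓ ≥ 1 - ε)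
        ≤ PB μ k (fun s => ∃ ℓ ∈ Finset.Icc 1 t,
            inflB μ f (supp s) (some b) ℓ < 1 - ε) := by
      apply PB_mono
      intro s hns
      push_neg at hns
      obtain ⟨ℓ, h1, h2, h3⟩ := hns
      exact ⟨ℓ, Finset.mem_Icc.mpr ⟨h1, h2⟩, h3⟩
    have hunion := PB_union μ k (Finset.Icc 1 t)
      (fun ℓ s => inflB μ f (supp s) (some b) ℓ < 1 - ε)
    have hper : ∀ ℓ ∈ Finset.Icc 1 t,
        PB μ k (fun s => inflB μ f (supp s) (some b) ℓ < 1 - ε)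
          ≤ (2/ε)*((1:ℝ)/2)^r := by
      intro ℓ hℓ
      obtain ⟨h1ℓ, hℓt⟩ := Finset.mem_Icc.mp hℓ
      have himp : ∀ s, inflB μ f (supp s) (some b) ℓ < 1 - ε → ε/2 < Gl μ f b κ ℓ s := by
        intro s hs
        rw [inflB_eq μ f] at hs
        have hcw := PB_compl μ ℓ (wit f b (supp s))
        have hnw : ε < PB μ ℓ (fun x => ¬ wit f b (supp s) x) := by linarith
        have hdecomp := Gl_decomp μ f b κ ℓ s
        have hβ := hb ℓ h1ℓ hℓt
        linarith
      calc PB μ k (fun s => inflB μ f (supp s) (some b) ℓ < 1 - ε)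
          ≤ PB μ k (fun s => ε/2 < Gl μ f b κ ℓ s) := PB_mono μ k himp
        _ ≤ ∑ s : Fin n → Bool, W μ k s * ((2/ε) * Gl μ f b κ ℓ s) := by
            unfold PB
            apply Finset.sum_le_sum
            intro s _
            apply mul_le_mul_of_nonneg_left _ (W_nonneg μ k s)
            by_cases hgs : ε/2 < Gl μ f b κ ℓ s
            · rw [ind_of hgs]
              have h1' : (2/ε)*(ε/2) = 1 := by field_simp
              calc (1:ℝ) = (2/ε)*(ε/2) := h1'.symm
                _ ≤ (2/ε) * Gl μ f b κ ℓ s := by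
                    apply mul_le_mul_of_nonneg_left (le_of_lt hgs) (by positivity)
            · rw [ind_of_not hgs]
              exact mul_nonneg (by positivity) (Gl_nonneg μ f b κ ℓ s)
        _ = (2/ε) * ∑ s : Fin n → Bool, W μ k s * Gl μ f b κ ℓ s := by
            rw [Finset.mul_sum]
            apply Finset.sum_congr rfl; intro s _; ring
        _ ≤ (2/ε)*((1:ℝ)/2)^r := by
            apply mul_le_mul_of_nonneg_left _ (by positivity)
            exact Gl_expect_bound μ f b κ ℓ k r hrκ
    have hcard : ∑ ℓ ∈ Finset.Icc 1 t, ((2/ε)*((1:ℝ)/2)^r)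
        = (t:ℝ) * ((2/ε)*((1:ℝ)/2)^r) := by
      rw [Finset.sum_const, Nat.card_Icc]
      simp [nsmul_eq_mul]
    have hfinal : (t:ℝ) * ((2/ε)*((1:ℝ)/2)^r) ≤ ε := by
      have h1 : (t:ℝ) * ((2/ε)*((1:ℝ)/2)^r) ≤ (t:ℝ) * ((2/ε)*(ε/(2*(t:ℝ)))^2) := by
        apply mul_le_mul_of_nonneg_left _ (by positivity)
        apply mul_le_mul_of_nonneg_left hpow (by positivity)
      have h2 : (t:ℝ) * ((2/ε)*(ε/(2*(t:ℝ)))^2) = ε/(2*(t:ℝ)) := by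
        field_simp
      have h3 : ε/(2*(t:ℝ)) ≤ ε := by
        rw [div_le_iff₀ (by positivity)]
        nlinarith
      linarith
    calc PB μ k (fun s => ¬ ∀ ℓ : ℕ, 1 ≤ ℓ → ℓ ≤ t →
          inflB μ f (supp s) (some b) ℓ ≥ 1 - ε)
        ≤ ∑ ℓ ∈ Finset.Icc 1 t, PB μ k
            (fun s => inflB μ f (supp s) (some b) ℓ < 1 - ε) := le_trans hsub hunion
      _ ≤ ∑ ℓ ∈ Finset.Icc 1 t, ((2/ε)*((1:ℝ)/2)^r) := Finset.sum_le_sum hper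
      _ = (t:ℝ) * ((2/ε)*((1:ℝ)/2)^r) := hcard
      _ ≤ ε := hfinal
  linarith
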